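/- arXiv:1809.10628 — 2 statements merged into one kernel-verified Lean document; each statement's English description precedes it below -/
import Mathlib

section
/- Let m ≥ 1 and let d_1, …, d_m be integers with d_i ≥ 2 for all i. Set r = tridet(d_1, …, d_m), a = tridet(d_2, …, d_m) and a' = tridet(d_1, …, d_{m−1}). Then tridet(d_1, …, d_m) = tridet(d_m, …, d_1) (the signed tridiagonal determinant is invariant under reversing the sequence), and a · a' ≡ 1 (mod r). -/
/-!
Reversing the sequence conjugates `tridiag` by the permutation matrix of `i ↦ m - 1 - i`, which
leaves the determinant unchanged. Expanding along the first row gives the three-term recurrence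
`tridet (a :: M) = a * tridet M - tridet M.tail`; along it the Casoratian
`tridet M * tridet (a :: M).dropLast - tridet (a :: M) * tridet M.dropLast` does not change when a
new first entry is prepended, so it keeps its value `1` for two entries. Hence `a * a' - 1` is a
multiple of `r`.
-/

/-- The tridiagonal matrix `tridiag(d_1, …, d_m)` with diagonal entries `−d_1, …, −d_m`,
entries `1` immediately above and below the diagonal, and `0` elsewhere. -/
def tridiag (L : List ℤ) : Matrix (Fin L.length) (Fin L.length) ℤ :=
  Matrix.of fun i j =>
    if (i : ℕ) = (j : ℕ) then -(L.get i)
    else if (i : ℕ) + 1 = (j : ℕ) ∨ (j : ℕ) + 1 = (i : ℕ) then 1 else 0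

/-- The signed tridiagonal determinant
`tridet(d_1, …, d_m) = (−1)^m det(tridiag(d_1, …, d_m))`;
for the empty sequence the value is `1`. -/
def tridet (L : List ℤ) : ℤ := (-1) ^ L.length * (tridiag L).det

section TridiagOfDiag

variable {R : Type*} [CommRing R]

/-- Indexing the diagonal by `ℕ` lets the minors in `det_tridiagOfDiag_succ_succ` be written with
shifted diagonals, avoiding casts between `Fin` types. -/
def tridiagOfDiag (v : ℕ → R) (n : ℕ) : Matrix (Fin n) (Fin n) R :=
  Matrix.of fun i j =>
    if (i : ℕ) = (j : ℕ) then v i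
    else if (i : ℕ) + 1 = (j : ℕ) ∨ (j : ℕ) + 1 = (i : ℕ) then 1 else 0

theorem tridiagOfDiag_congr {v w : ℕ → R} {n : ℕ} (h : ∀ k < n, v k = w k) :
    tridiagOfDiag v n = tridiagOfDiag w n := by
  ext i j
  simp only [tridiagOfDiag, Matrix.of_apply, h i i.isLt]

theorem submatrix_rev_tridiagOfDiag (v : ℕ → R) (n : ℕ) :
    (tridiagOfDiag v n).submatrix Fin.rev Fin.rev = tridiagOfDiag (fun k => v (n - 1 - k)) n := by
  ext i j
  simp only [tridiagOfDiag, Matrix.submatrix_apply, Matrix.of_apply, Fin.val_rev]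
  split_ifs <;> first | rfl | omega | (congr 1; omega)

theorem det_tridiagOfDiag_succ_succ (v : ℕ → R) (n : ℕ) :
    (tridiagOfDiag v (n + 2)).det =
      v 0 * (tridiagOfDiag (fun k => v (k + 1)) (n + 1)).det -
        (tridiagOfDiag (fun k => v (k + 2)) n).det := by
  set A := tridiagOfDiag v (n + 2)
  have hminor₀ :
      A.submatrix Fin.succ (Fin.succAbove 0) = tridiagOfDiag (fun k => v (k + 1)) (n + 1) := by
    ext i j
    simp only [A, tridiagOfDiag, Matrix.submatrix_apply, Fin.succAbove_zero, Matrix.of_apply,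
      Fin.val_succ]
    split_ifs <;> first | rfl | omega
  have hminor₁ : (A.submatrix Fin.succ (Fin.succAbove (Fin.succ 0))).det =
      (tridiagOfDiag (fun k => v (k + 2)) n).det := by
    rw [Matrix.det_succ_column_zero, Fin.sum_univ_succ, Finset.sum_eq_zero]
    · have hcorner : (A.submatrix Fin.succ (Fin.succAbove (Fin.succ 0))).submatrix
          (Fin.succAbove 0) Fin.succ = tridiagOfDiag (fun k => v (k + 2)) n := by
        ext i j
        simp only [A, tridiagOfDiag, Matrix.submatrix_apply, Fin.succAbove_zero,
          Fin.succ_succAbove_succ, Matrix.of_apply, Fin.val_succ]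
        split_ifs <;> first | rfl | omega
      rw [hcorner]
      simp [A, tridiagOfDiag]
    · intro i _
      simp [A, tridiagOfDiag]
  rw [Matrix.det_succ_row_zero, Fin.sum_univ_succ, Fin.sum_univ_succ, Finset.sum_eq_zero,
    hminor₀, hminor₁]
  · simp [A, tridiagOfDiag]; ring
  · intro j _
    simp [A, tridiagOfDiag]

end TridiagOfDiag

theorem tridiag_eq_tridiagOfDiag (L : List ℤ) :
    tridiag L = tridiagOfDiag (fun k => -L.getD k 0) L.length := by
  ext i j
  simp [tridiag, tridiagOfDiag]

theorem tridet_eq (L : List ℤ) :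
    tridet L = (-1) ^ L.length * (tridiagOfDiag (fun k => -L.getD k 0) L.length).det := by
  rw [tridet, tridiag_eq_tridiagOfDiag]

theorem tridet_nil : tridet [] = 1 := by
  simp [tridet]

theorem tridet_singleton (a : ℤ) : tridet [a] = a := by
  simp [tridet_eq, Matrix.det_unique, tridiagOfDiag]

theorem tridet_cons {M : List ℤ} (hM : M ≠ []) (a : ℤ) :
    tridet (a :: M) = a * tridet M - tridet M.tail := by
  obtain ⟨b, t, rfl⟩ := List.exists_cons_of_ne_nil hM
  simp only [tridet_eq, List.length_cons, det_tridiagOfDiag_succ_succ, List.getD_cons_succ,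
    List.getD_cons_zero, List.tail_cons]
  ring

theorem tridet_reverse (L : List ℤ) : tridet L.reverse = tridet L := by
  rw [tridet_eq, tridet_eq, List.length_reverse,
    tridiagOfDiag_congr (w := fun k => -L.getD (L.length - 1 - k) 0)
      (fun k hk => by rw [List.getD_reverse k hk]),
    ← submatrix_rev_tridiagOfDiag (fun k => -L.getD k 0)]
  exact congrArg _ (Matrix.det_submatrix_equiv_self Fin.revPerm _)

theorem tridet_mul_tridet_dropLast_sub {M : List ℤ} (hM : M ≠ []) (a : ℤ) :
    tridet M * tridet (a :: M).dropLast - tridet (a :: M) * tridet M.dropLast = 1 := by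
  induction M generalizing a with
  | nil => exact absurd rfl hM
  | cons b N ih =>
    rcases eq_or_ne N [] with rfl | hN
    · simp only [List.dropLast_singleton, List.dropLast_cons_cons,
        tridet_cons (List.cons_ne_nil b []), tridet_singleton, List.tail_cons, tridet_nil]
      ring
    · have hbN : (b :: N).dropLast ≠ [] := by simp [List.dropLast_cons_of_ne_nil hN]
      rw [List.dropLast_cons_of_ne_nil (List.cons_ne_nil b N), tridet_cons hbN, tridet_cons hM,
        List.tail_dropLast, List.tail_cons, ← ih hN b]
      ring

theorem tridet_tail_mul_tridet_dropLast_modEq (L : List ℤ) :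
    tridet L.tail * tridet L.dropLast ≡ 1 [ZMOD tridet L] := by
  rcases L with _ | ⟨a, M⟩
  · simp [tridet_nil]
  rcases eq_or_ne M [] with rfl | hM
  · simp [tridet_nil]
  rw [List.tail_cons]
  refine Int.modEq_iff_dvd.mpr ⟨-tridet M.dropLast, ?_⟩
  linarith [tridet_mul_tridet_dropLast_sub hM a]

theorem tridet_reverse_and_tail_mul_dropLast_general (L : List ℤ) :
    tridet L = tridet L.reverse ∧
    tridet L.tail * tridet L.dropLast ≡ 1 [ZMOD tridet L] :=
  ⟨(tridet_reverse L).symm, tridet_tail_mul_tridet_dropLast_modEq L⟩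

/-- For `m ≥ 1` and integers `d_1, …, d_m` all `≥ 2`, set
`r = tridet(d_1, …, d_m)`, `a = tridet(d_2, …, d_m)` and `a′ = tridet(d_1, …, d_{m−1})`.
Then `tridet(d_1, …, d_m) = tridet(d_m, …, d_1)` (the signed tridiagonal determinant is
invariant under reversing the sequence), and `a · a′ ≡ 1 (mod r)`. -/
theorem tridet_reverse_and_tail_mul_dropLast (L : List ℤ) (hL : L ≠ [])
    (hd : ∀ d ∈ L, 2 ≤ d) :
    tridet L = tridet L.reverse ∧
    tridet L.tail * tridet L.dropLast ≡ 1 [ZMOD tridet L] :=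
  tridet_reverse_and_tail_mul_dropLast_general L
end

section
/- Let k be a field, let l ≥ 1, and let c_1, …, c_l be integers with c_j ≥ 2 for all j. Let K(c_1, …, c_l) denote the quotient of the free associative k-algebra k⟨z_1, …, z_l⟩ by the two-sided ideal generated by the monomials z_j^{c_j} for all j, the monomials z_j z_k for all j < k, and the monomials z_j^{c_j−1} · z_{j−1}^{c_{j−1}−2} · ⋯ · z_{k+1}^{c_{k+1}−2} · z_k^{c_k−1} for all j > k. Then the opposite algebra K(c_1, …, c_l)^op is isomorphic as a k-algebra to K(c_l, …, c_1), the algebra defined by the same recipe with the sequence (c_1, …, c_l) reversed. -/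
/-- The "middle" factor `z_{j−1}^{c_{j−1}−2} ⋯ z_{k+1}^{c_{k+1}−2}` (indices strictly
between `k'` and `j`, in descending order) appearing in the Kalck–Karmazyn relations. -/
noncomputable def kkMiddle (k : Type) [Field k] {l : ℕ} (c : Fin l → ℕ)
    (k' j : Fin l) : FreeAlgebra k (Fin l) :=
  ((((List.finRange l).filter (fun i => decide (k' < i ∧ i < j))).reverse).map
    (fun i => FreeAlgebra.ι k i ^ (c i - 2))).prod

/-- The set of monomial relations defining the Kalck–Karmazyn algebra
`K(c_1, …, c_l)`: the monomials `z_j^{c_j}` for all `j`, the monomials `z_j z_k`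
for `j < k`, and the monomials
`z_j^{c_j−1} · z_{j−1}^{c_{j−1}−2} ⋯ z_{k+1}^{c_{k+1}−2} · z_k^{c_k−1}` for `j > k`. -/
noncomputable def kkRels (k : Type) [Field k] {l : ℕ} (c : Fin l → ℕ) :
    Set (FreeAlgebra k (Fin l)) :=
  { x | ∃ j : Fin l, x = FreeAlgebra.ι k j ^ (c j) } ∪
  { x | ∃ j j' : Fin l, j < j' ∧ x = FreeAlgebra.ι k j * FreeAlgebra.ι k j' } ∪
  { x | ∃ j j' : Fin l, j' < j ∧
      x = FreeAlgebra.ι k j ^ (c j - 1) * kkMiddle k c j' j *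
        FreeAlgebra.ι k j' ^ (c j' - 1) }

/-- The Kalck–Karmazyn algebra `K(c_1, …, c_l)`: the quotient of the free associative
`k`-algebra `k⟨z_1, …, z_l⟩` by the two-sided ideal generated by the monomials of
`kkRels` (realised as the ring quotient identifying each such monomial with `0`). -/
noncomputable abbrev KKAlgebra (k : Type) [Field k] {l : ℕ} (c : Fin l → ℕ) : Type :=
  RingQuot (fun a b : FreeAlgebra k (Fin l) => a ∈ kkRels k c ∧ b = 0)


open MulOpposite

section Aux

variable (k : Type) [Field k] {l : ℕ}

noncomputable def kkRev : FreeAlgebra k (Fin l) →ₐ[k] (FreeAlgebra k (Fin l))ᵐᵒᵖ :=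
  FreeAlgebra.lift k (fun i => op (FreeAlgebra.ι k i.rev))

@[simp] lemma kkRev_ι (i : Fin l) :
    kkRev k (FreeAlgebra.ι k i) = op (FreeAlgebra.ι k i.rev) := by
  simp [kkRev]

lemma kkRev_pow (i : Fin l) (n : ℕ) :
    (kkRev k (FreeAlgebra.ι k i ^ n)).unop = FreeAlgebra.ι k i.rev ^ n := by
  simp [map_pow]

lemma kkFilter_rev (k' j : Fin l) :
    ((List.finRange l).filter (fun i => decide (j.rev < i ∧ i < k'.rev))).reverse
      = ((List.finRange l).filter (fun i => decide (k' < i ∧ i < j))).map Fin.rev := by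
  rw [← List.filter_reverse, List.finRange_reverse, List.filter_map]
  congr 1
  refine List.filter_congr fun i _ => ?_
  simp [Fin.rev_lt_rev, and_comm]


lemma kkRev_middle (c : Fin l → ℕ) (k' j : Fin l) :
    (kkRev k (kkMiddle k c k' j)).unop
      = kkMiddle k (fun i => c i.rev) j.rev k'.rev := by
  unfold kkMiddle
  rw [kkFilter_rev, map_list_prod, unop_list_prod]
  simp only [List.map_map, List.map_reverse, List.reverse_reverse]
  refine congrArg List.prod (List.map_congr_left fun i _ => ?_)
  simp only [Function.comp]
  rw [Fin.rev_rev]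
  exact kkRev_pow k i (c i - 2)

lemma kkRev_mem_rels {c d : Fin l → ℕ} (hd : d = fun i => c i.rev) {x : FreeAlgebra k (Fin l)}
    (hx : x ∈ kkRels k c) : (kkRev k x).unop ∈ kkRels k d := by
  subst hd
  rcases hx with (⟨j, rfl⟩ | ⟨j, j', hjj, rfl⟩) | ⟨j, j', hjj, rfl⟩
  · exact Or.inl (Or.inl ⟨j.rev, by rw [kkRev_pow]; simp⟩)
  · refine Or.inl (Or.inr ⟨j'.rev, j.rev, Fin.rev_lt_rev.mpr hjj, ?_⟩)
    simp
  · refine Or.inr ⟨j'.rev, j.rev, Fin.rev_lt_rev.mpr hjj, ?_⟩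
    simp only [map_mul, unop_mul, kkRev_pow, kkRev_middle, Fin.rev_rev]
    rw [mul_assoc]

noncomputable def kkHom (c d : Fin l → ℕ) (hd : d = fun i => c i.rev) :
    KKAlgebra k c →ₐ[k] (KKAlgebra k d)ᵐᵒᵖ :=
  RingQuot.liftAlgHom k ⟨(AlgHom.op (RingQuot.mkAlgHom k
      (fun a b : FreeAlgebra k (Fin l) => a ∈ kkRels k d ∧ b = 0))).comp (kkRev k),
    by
      rintro x y ⟨hx, rfl⟩
      have h1 : RingQuot.mkAlgHom k
          (fun a b : FreeAlgebra k (Fin l) => a ∈ kkRels k d ∧ b = 0) ((kkRev k x).unop)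
          = 0 := by
        rw [RingQuot.mkAlgHom_rel k ⟨kkRev_mem_rels k hd hx, rfl⟩, map_zero]
      simp [AlgHom.op_apply_apply, h1]⟩

lemma kkHom_mk (c d : Fin l → ℕ) (hd : d = fun i => c i.rev) (x : FreeAlgebra k (Fin l)) :
    kkHom k c d hd (RingQuot.mkAlgHom k _ x)
      = op (RingQuot.mkAlgHom k
          (fun a b : FreeAlgebra k (Fin l) => a ∈ kkRels k d ∧ b = 0) ((kkRev k x).unop)) := by
  simp [kkHom, RingQuot.liftAlgHom_mkAlgHom_apply, AlgHom.op_apply_apply]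

end Aux

/-- For a field `k`, `l ≥ 1` and integers `c_1, …, c_l ≥ 2`, the
opposite algebra `K(c_1, …, c_l)ᵒᵖ` is isomorphic as a `k`-algebra to
`K(c_l, …, c_1)`, the algebra defined by the same recipe with the sequence reversed. -/
theorem kkAlgebra_op_iso_reverse (k : Type) [Field k] (l : ℕ) (hl : 1 ≤ l)
    (c : Fin l → ℕ) (hc : ∀ j, 2 ≤ c j) :
    Nonempty ((KKAlgebra k c)ᵐᵒᵖ ≃ₐ[k] KKAlgebra k (fun i => c i.rev)) := by
  set c' : Fin l → ℕ := fun i => c i.rev with hc'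
  have hd' : c = fun i => c' i.rev := funext fun i => by simp [hc']
  refine ⟨AlgEquiv.ofAlgHom (AlgHom.opComm (kkHom k c c' rfl)) (kkHom k c' c hd') ?_ ?_⟩
  · refine RingQuot.ringQuot_ext' k _ _ (FreeAlgebra.hom_ext (funext fun i => ?_))
    simp only [AlgHom.comp_apply, Function.comp, AlgHom.id_comp, AlgHom.coe_comp]
    rw [kkHom_mk, kkRev_ι, unop_op]
    simp only [AlgHom.opComm_apply_apply]
    rw [unop_op, kkHom_mk, kkRev_ι, unop_op, Fin.rev_rev]
    rfl
  · have : AlgHom.op.symm ((kkHom k c' c hd').comp (AlgHom.opComm (kkHom k c c' rfl)))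
        = AlgHom.op.symm (AlgHom.id k ((KKAlgebra k c)ᵐᵒᵖ)) := by
      refine RingQuot.ringQuot_ext' k _ _ (FreeAlgebra.hom_ext (funext fun i => ?_))
      simp only [AlgHom.comp_apply, Function.comp, AlgHom.coe_comp]
      show unop ((kkHom k c' c hd') ((AlgHom.opComm (kkHom k c c' rfl))
          (op ((RingQuot.mkAlgHom k fun a b => a ∈ kkRels k c ∧ b = 0) (FreeAlgebra.ι k i)))))
        = unop (op ((RingQuot.mkAlgHom k fun a b => a ∈ kkRels k c ∧ b = 0) (FreeAlgebra.ι k i)))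
      rw [AlgHom.opComm_apply_apply, unop_op, kkHom_mk, kkRev_ι]
      simp only [unop_op]
      rw [kkHom_mk, kkRev_ι]
      simp
    exact AlgHom.op.symm.injective this
end
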